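/- Graded duals are weakly roughly geodesic: let (C_R)_{R≥1} be a graded system on a set with walls (S,P) with constants L_R, m_R, κ_R, and suppose there is M ≥ 1 with m_R ≤ M for all R. Let λ_R be positive reals with λ_R ≤ κ_R and Λ := Σ_{R≥1} λ_R (L_R + m_R + 1) < ∞, set Dist(x,y) = Σ_{R≥1} λ_R · dist_{C_R}(x,y), and let X = {x ∈ X̂ : Dist(x,φ_s) < ∞ for all s ∈ S}. Then (X, Dist) is 4MΛ-weakly roughly geodesic: for all x,y ∈ X there exist n ∈ ℕ and points z₀ = x, z₁, …, z_n = y in X such that Dist(z_r, z_{r+1}) ≤ 4MΛ for all 0 ≤ r < n and Dist(x, z_r) + Dist(z_r, y) ≤ Dist(x,y) + 4MΛ for all 0 ≤ r ≤ n. -/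

import Mathlib

open Set

namespace WallDuality

variable {S : Type*}

/-- A wall on `S`, recorded as the unordered pair of its two complementary halfspaces. -/
def IsWall (h : Set (Set S)) : Prop := ∃ A : Set S, h = {A, Aᶜ}

/-- A set with walls: every element of `P` is a wall on `S`. -/
def IsWallSystem (P : Set (Set (Set S))) : Prop := ∀ h ∈ P, IsWall h

variable (P : Set (Set (Set S)))

/-- An ultrafilter on `P`: a consistent choice of a halfspace of each wall of `P`. -/
def IsUltra (x : ↥P → Set S) : Prop :=
  (∀ w : ↥P, x w ∈ w.1) ∧
    ∀ (w₁ w₂ : ↥P) (A B : Set S), A ∈ w₁.1 → B ∈ w₂.1 → A ⊆ B → x w₁ = A → x w₂ = B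

/-- The set `X̂` of all ultrafilters on `P`. -/
def hatX : Set (↥P → Set S) := {x | IsUltra P x}

/-- The principal ultrafilter of a point `s`: each wall is oriented towards `s`. -/
def principalUF (s : S) : ↥P → Set S := fun w => ⋃₀ {A | A ∈ w.1 ∧ s ∈ A}

/-- The pseudodistance associated with a collection `C` of subsets of `P`:
the supremum of the cardinalities of members of `C` all of whose walls separate
the two orientations. -/
noncomputable def wallDist (C : Set (Set ↥P)) (x y : ↥P → Set S) : ℕ∞ :=
  ⨆ c ∈ {c | c ∈ C ∧ ∀ w ∈ c, x w ≠ y w}, c.encard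

/-- A dualisable system on `(S, P)`. -/
structure IsDualisable (C : Set (Set ↥P)) : Prop where
  singleton_mem : ∀ w : ↥P, ({w} : Set ↥P) ∈ C
  subset_mem : ∀ c ∈ C, ∀ c' ⊆ c, c' ∈ C
  bounded : ∀ s t : S, ∃ M : ℕ, ∀ c ∈ C,
    (∀ w ∈ c, principalUF P s w ≠ principalUF P t w) → c.encard ≤ (M : ℕ∞)

/-- The dual space `X_C`: ultrafilters at finite distance from all principal ones. -/
def dualSpace (C : Set (Set ↥P)) : Set (↥P → Set S) :=
  {x | IsUltra P x ∧ ∀ s : S, wallDist P C x (principalUF P s) ≠ ⊤}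

/-- The majority-vote median of three orientations. -/
def medianUF (x y z : ↥P → Set S) : ↥P → Set S :=
  fun w => x w ∩ y w ∪ x w ∩ z w ∪ y w ∩ z w

/-- A `P`-convex subset of `X̂`: an intersection of halfspaces. -/
def IsPConvex (C' : Set (↥P → Set S)) : Prop :=
  ∃ (Q : Set ↥P) (σ : ↥P → Set S), (∀ w ∈ Q, σ w ∈ w.1) ∧
    C' = {v | IsUltra P v ∧ ∀ w ∈ Q, v w = σ w}

open scoped Classical in
/-- The gate of `z` to a set `C'` of orientations: reverse the orientation of exactly
those walls that separate `z` from `C'`. -/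
noncomputable def gateUF (C' : Set (↥P → Set S)) (z : ↥P → Set S) : ↥P → Set S :=
  fun w => if ∃ v ∈ C', v w = z w then z w else (z w)ᶜ

/-- `A` is gated in `Y` (with respect to the majority-vote median). -/
def IsGatedIn (Y A : Set (↥P → Set S)) : Prop :=
  ∀ x ∈ Y, ∃! g, g ∈ A ∧ ∀ a ∈ A, medianUF P a g x = g

/-- `σ` is a nested choice of halfspaces witnessing that `c` is a chain. -/
def IsChainOrder (σ : ↥P → Set S) (c : Set ↥P) : Prop :=
  (∀ w ∈ c, σ w ∈ w.1) ∧ ∀ w₁ ∈ c, ∀ w₂ ∈ c, σ w₁ ⊆ σ w₂ ∨ σ w₂ ⊆ σ w₁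

/-- A chain of walls. -/
def IsWallChain (c : Set ↥P) : Prop := ∃ σ, IsChainOrder P σ c

/-- A system of chains: a dualisable system all of whose members are chains. -/
def IsChainSystem (C : Set (Set ↥P)) : Prop :=
  IsDualisable P C ∧ ∀ c ∈ C, IsWallChain P c

/-- `C` is `m`-gluable: two members of `C`, one entirely preceding the other and with
union a chain, can be glued after removing at most `m` consecutive walls taken from
the last `m` walls of the first and the first `m` walls of the second. -/
def IsGluable (C : Set (Set ↥P)) (m : ℕ) : Prop :=
  ∀ c₁ ∈ C, ∀ c₂ ∈ C, ∀ σ : ↥P → Set S,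
    IsChainOrder P σ (c₁ ∪ c₂) → Disjoint c₁ c₂ →
    (∀ w₁ ∈ c₁, ∀ w₂ ∈ c₂, σ w₁ ⊆ σ w₂) →
    ∃ b ⊆ c₁ ∪ c₂,
      b.encard ≤ (m : ℕ∞) ∧
      (∀ w ∈ b ∩ c₁, {w' | w' ∈ c₁ ∧ σ w ⊂ σ w'}.encard < (m : ℕ∞)) ∧
      (∀ w ∈ b ∩ c₂, {w' | w' ∈ c₂ ∧ σ w' ⊂ σ w}.encard < (m : ℕ∞)) ∧
      (∀ w₁ ∈ b, ∀ w₂ ∈ b, ∀ w ∈ c₁ ∪ c₂, σ w₁ ⊆ σ w → σ w ⊆ σ w₂ → w ∈ b) ∧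
      (c₁ ∪ c₂) \ b ∈ C

/-- The ball of radius `r` about `x` in `X_C`. -/
def ballX (C : Set (Set ↥P)) (x : ↥P → Set S) (r : ℕ∞) : Set (↥P → Set S) :=
  {z | z ∈ dualSpace P C ∧ wallDist P C x z ≤ r}

/-- The normal wall path: the gate of `y` to the ball of radius `r` about `x`. -/
noncomputable def nwp (C : Set (Set ↥P)) (x y : ↥P → Set S) (r : ℕ) : ↥P → Set S :=
  gateUF P (ballX P C x (r : ℕ∞)) y

/-- Two walls cross: all four quarterspaces are nonempty. -/
def Crosses (w₁ w₂ : ↥P) : Prop := ∀ A ∈ w₁.1, ∀ B ∈ w₂.1, (A ∩ B).Nonempty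

/-- `C` is `L`-separated. -/
def IsSeparated (C : Set (Set ↥P)) (L : ℕ) : Prop :=
  ∀ w₁ w₂ : ↥P, w₁ ≠ w₂ → ({w₁, w₂} : Set ↥P) ∈ C →
    ∀ c ∈ C, (∀ w ∈ c, Crosses P w w₁ ∧ Crosses P w w₂) → c.encard ≤ (L : ℕ∞)

end WallDuality

namespace WallDuality

open scoped ENNReal

variable {S : Type*} (P : Set (Set (Set S)))

/-- The weighted distance associated with a sequence of dualisable systems. -/
noncomputable def gradedDist (C : ℕ → Set (Set ↥P)) (lam : ℕ → ℝ≥0∞)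
    (x y : ↥P → Set S) : ℝ≥0∞ :=
  ∑' R, lam R * (wallDist P (C R) x y : ℝ≥0∞)

/-- The graded dual space. -/
def gradedSpace (C : ℕ → Set (Set ↥P)) (lam : ℕ → ℝ≥0∞) : Set (↥P → Set S) :=
  {x | IsUltra P x ∧ ∀ s : S, gradedDist P C lam x (principalUF P s) ≠ ⊤}

/-- A graded system on `(S, P)`. -/
structure IsGradedSystem (C : ℕ → Set (Set ↥P)) (L m : ℕ → ℕ) (κ : ℕ → ℝ≥0∞) : Prop where
  mono : ∀ R, C R ⊆ C (R + 1)
  chain : ∀ R, IsChainSystem P (C R)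
  separated : ∀ R, IsSeparated P (C R) (L R)
  gluable : ∀ R, IsGluable P (C R) (m R)
  L_pos : ∀ R, 1 ≤ L R
  kappa_pos : ∀ R, 0 < κ R
  kappa_fin : ∀ R, κ R ≠ ⊤
  bounded : ∀ s t : S, ∃ M : ℝ≥0∞, M ≠ ⊤ ∧ ∀ c : ℕ → Set ↥P,
    (∀ R, c R ∈ C R ∧ ∀ w ∈ c R, principalUF P s w ≠ principalUF P t w) →
    (∑' R, κ R * ((c R).encard : ℝ≥0∞)) ≤ M

end WallDuality

namespace WallDuality

open scoped ENNReal Classical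

section RGAux

variable {S : Type*} {P : Set (Set (Set S))}

/-- The set of walls separating two orientations. -/
def sepw (x y : ↥P → Set S) : Set ↥P := {w | x w ≠ y w}

lemma mem_sepw {x y : ↥P → Set S} {w : ↥P} : w ∈ sepw x y ↔ x w ≠ y w := Iff.rfl

/-- The supremum of sizes of chains of `CC` contained in `U`. -/
noncomputable def chainSup (CC : Set (Set ↥P)) (U : Set ↥P) : ℕ∞ :=
  ⨆ c ∈ {c | c ∈ CC ∧ c ⊆ U}, c.encard

lemma wallDist_eq_chainSup (CC : Set (Set ↥P)) (u v : ↥P → Set S) :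
    wallDist P CC u v = chainSup CC (sepw u v) := rfl

lemma le_chainSup {CC : Set (Set ↥P)} {U c : Set ↥P} (hc : c ∈ CC) (hcU : c ⊆ U) :
    c.encard ≤ chainSup CC U :=
  le_iSup₂ (f := fun c (_ : c ∈ {c | c ∈ CC ∧ c ⊆ U}) => c.encard) c ⟨hc, hcU⟩

lemma chainSup_le {CC : Set (Set ↥P)} {U : Set ↥P} {b : ℕ∞}
    (h : ∀ c ∈ CC, c ⊆ U → c.encard ≤ b) : chainSup CC U ≤ b :=
  iSup₂_le fun c hc => h c hc.1 hc.2

lemma chainSup_mono (CC : Set (Set ↥P)) {U V : Set ↥P} (h : U ⊆ V) :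
    chainSup CC U ≤ chainSup CC V :=
  chainSup_le fun _ hc hcU => le_chainSup hc (hcU.trans h)

lemma chainSup_exists_max {CC : Set (Set ↥P)} {U : Set ↥P} (hne : ∅ ∈ CC)
    (hfin : chainSup CC U ≠ ⊤) :
    ∃ c ∈ CC, c ⊆ U ∧ c.encard = chainSup CC U := by
  by_cases h0 : chainSup CC U = 0
  · exact ⟨∅, hne, empty_subset _, by simp [h0]⟩
  by_contra hcon
  push_neg at hcon
  have hlt : ∀ c ∈ CC, c ⊆ U → c.encard < chainSup CC U := by
    intro c hc hcU
    exact lt_of_le_of_ne (le_chainSup hc hcU) (fun h => hcon c hc hcU h)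
  obtain ⟨n, hn⟩ : ∃ n : ℕ, chainSup CC U = (n : ℕ∞) + 1 := by
    lift chainSup CC U to ℕ using hfin with k hk
    obtain ⟨n, rfl⟩ := Nat.exists_eq_succ_of_ne_zero (by simpa using h0)
    exact ⟨n, by push_cast; ring⟩
  have : chainSup CC U ≤ (n : ℕ∞) := by
    apply chainSup_le
    intro c hc hcU
    have := hlt c hc hcU
    rw [hn] at this
    exact (ENat.lt_add_one_iff (by simp)).1 this
  rw [hn] at this
  have h2 : ((n : ℕ) + 1 : ℕ) ≤ (n : ℕ) := by exact_mod_cast this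
  omega

section Walls

variable {x y : ↥P → Set S}

lemma wall_eq_pair (hP : IsWallSystem P) (w : ↥P) {u : Set S} (hu : u ∈ w.1) :
    w.1 = {u, uᶜ} := by
  obtain ⟨A, hA⟩ := hP w.1 w.2
  rw [hA] at hu ⊢
  rcases hu with rfl | hu
  · rfl
  · simp only [Set.mem_singleton_iff] at hu
    subst hu
    rw [compl_compl]
    exact Set.pair_comm _ _

lemma wall_determined (hP : IsWallSystem P) (w w' : ↥P) {u : Set S}
    (hu : u ∈ w.1) (hu' : u ∈ w'.1) : w = w' := by
  apply Subtype.ext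
  rw [wall_eq_pair hP w hu, wall_eq_pair hP w' hu']

lemma compl_of_ne (hP : IsWallSystem P) (w : ↥P) {u v : Set S}
    (hu : u ∈ w.1) (hv : v ∈ w.1) (huv : u ≠ v) : v = uᶜ := by
  have := wall_eq_pair hP w hu
  rw [this] at hv
  rcases hv with rfl | hv
  · exact absurd rfl huv
  · exact hv

lemma mem_wall_cases (hP : IsWallSystem P) (w : ↥P) {u v B : Set S}
    (hu : u ∈ w.1) (hv : v ∈ w.1) (huv : u ≠ v) (hB : B ∈ w.1) : B = u ∨ B = v := by
  have hveq := compl_of_ne hP w hu hv huv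
  have := wall_eq_pair hP w hu
  rw [this] at hB
  rcases hB with rfl | hB
  · exact Or.inl rfl
  · exact Or.inr (by rw [hveq]; exact hB)

lemma ultra_mono {x : ↥P → Set S} (hx : IsUltra P x) {w w' : ↥P} {B : Set S}
    (hB : B ∈ w'.1) (h : x w ⊆ B) : x w' = B :=
  hx.2 w w' (x w) B (hx.1 w) hB h rfl

lemma sep_compl (hP : IsWallSystem P) (hx : IsUltra P x) (hy : IsUltra P y)
    {w : ↥P} (hw : w ∈ sepw x y) : y w = (x w)ᶜ :=
  compl_of_ne hP w (hx.1 w) (hy.1 w) hw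

lemma not_sub_xy (hx : IsUltra P x) (hy : IsUltra P y) {w w' : ↥P}
    (hw' : w' ∈ sepw x y) : ¬ x w ⊆ y w' := fun h =>
  hw' (ultra_mono hx (hy.1 w') h)

lemma not_sub_yx (hx : IsUltra P x) (hy : IsUltra P y) {w w' : ↥P}
    (hw' : w' ∈ sepw x y) : ¬ y w ⊆ x w' := fun h =>
  hw' (ultra_mono hy (hx.1 w') h).symm

lemma sep_antisymm (hP : IsWallSystem P) (hy : IsUltra P y) {w w' : ↥P}
    (h : y w = y w') : w = w' :=
  wall_determined hP w w' (hy.1 w) (h ▸ hy.1 w')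

lemma cross_symm {w w' : ↥P} (h : Crosses P w w') : Crosses P w' w :=
  fun A hA B hB => by rw [Set.inter_comm]; exact h B hB A hA

lemma cross_or_comp (hP : IsWallSystem P) (hx : IsUltra P x) (hy : IsUltra P y)
    {w w' : ↥P} (hw : w ∈ sepw x y) (hw' : w' ∈ sepw x y) (h : ¬ Crosses P w w') :
    y w ⊆ y w' ∨ y w' ⊆ y w := by
  rw [Crosses] at h
  push_neg at h
  obtain ⟨A, hA, B, hB, hAB⟩ := h
  have hABd : A ⊆ Bᶜ := by
    rw [← Set.disjoint_iff_inter_eq_empty] at hAB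
    exact Set.subset_compl_iff_disjoint_right.2 hAB
  have hxc : y w = (x w)ᶜ := sep_compl hP hx hy hw
  have hxc' : y w' = (x w')ᶜ := sep_compl hP hx hy hw'
  rcases mem_wall_cases hP w (hx.1 w) (hy.1 w) hw hA with rfl | rfl <;>
    rcases mem_wall_cases hP w' (hx.1 w') (hy.1 w') hw' hB with rfl | rfl
  · exact absurd (hABd.trans (by rw [hxc'])) (not_sub_xy hx hy hw')
  · refine Or.inr ?_
    have : x w ⊆ x w' := hABd.trans (by rw [hxc', compl_compl])
    rw [hxc, hxc']
    exact Set.compl_subset_compl.2 this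
  · exact Or.inl (hABd.trans (by rw [hxc']))
  · exact absurd (hABd.trans (by rw [hxc', compl_compl])) (not_sub_yx hx hy hw')

lemma not_cross_of_le (hP : IsWallSystem P) (hx : IsUltra P x) (hy : IsUltra P y)
    {w w' : ↥P} (hw' : w' ∈ sepw x y) (h : y w ⊆ y w') : ¬ Crosses P w w' := by
  intro hc
  have hne := hc (y w) (hy.1 w) (x w') (hx.1 w')
  have hxc' : x w' = (y w')ᶜ := by
    rw [sep_compl hP hx hy hw', compl_compl]
  rw [hxc'] at hne
  obtain ⟨a, ha1, ha2⟩ := hne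
  exact ha2 (h ha1)

lemma chain_y_comp (hP : IsWallSystem P) (hx : IsUltra P x) (hy : IsUltra P y)
    {c : Set ↥P} (hc : IsWallChain P c) (hcW : c ⊆ sepw x y) {w w' : ↥P}
    (hw : w ∈ c) (hw' : w' ∈ c) : y w ⊆ y w' ∨ y w' ⊆ y w := by
  obtain ⟨σ, hσmem, hσcomp⟩ := hc
  have hcases : ∀ a ∈ c, σ a = x a ∨ σ a = y a := fun a ha =>
    mem_wall_cases hP a (hx.1 a) (hy.1 a) (hcW ha) (hσmem a ha)
  rcases hσcomp w hw w' hw' with h | h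
  · rcases hcases w hw with h1 | h1 <;> rcases hcases w' hw' with h2 | h2 <;>
      rw [h1, h2] at h
    · refine Or.inr ?_
      rw [sep_compl hP hx hy (hcW hw), sep_compl hP hx hy (hcW hw')]
      exact Set.compl_subset_compl.2 h
    · exact absurd h (not_sub_xy hx hy (hcW hw'))
    · exact absurd h (not_sub_yx hx hy (hcW hw'))
    · exact Or.inl h
  · rcases hcases w hw with h1 | h1 <;> rcases hcases w' hw' with h2 | h2 <;>
      rw [h1, h2] at h
    · refine Or.inl ?_
      rw [sep_compl hP hx hy (hcW hw), sep_compl hP hx hy (hcW hw')]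
      exact Set.compl_subset_compl.2 h
    · exact absurd h (not_sub_yx hx hy (hcW hw))
    · exact absurd h (not_sub_xy hx hy (hcW hw))
    · exact Or.inr h

end Walls

section Cuts

variable {x y : ↥P → Set S}

/-- An up-closed set of separating walls. -/
def IsCut (x y : ↥P → Set S) (T : Set ↥P) : Prop :=
  T ⊆ sepw x y ∧ ∀ w ∈ T, ∀ w' ∈ sepw x y, y w ⊆ y w' → w' ∈ T

/-- The orientation obtained from `x` by flipping the walls of `T` towards `y`. -/
noncomputable def cutUF (x y : ↥P → Set S) (T : Set ↥P) : ↥P → Set S :=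
  fun w => if w ∈ T then y w else x w

lemma cutUF_isUltra (hP : IsWallSystem P) (hx : IsUltra P x) (hy : IsUltra P y)
    {T : Set ↥P} (hT : IsCut x y T) : IsUltra P (cutUF x y T) := by
  constructor
  · intro w
    unfold cutUF
    split_ifs
    · exact hy.1 w
    · exact hx.1 w
  · intro w₁ w₂ A B hA hB hAB hzA
    unfold cutUF at hzA ⊢
    by_cases h1 : w₁ ∈ T <;> by_cases h2 : w₂ ∈ T <;>
      simp only [h1, h2, if_pos, if_neg, if_true, if_false] at hzA ⊢
    · exact hy.2 w₁ w₂ A B hA hB hAB hzA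
    · -- w₁ ∈ T, w₂ ∉ T
      have hyB : y w₂ = B := hy.2 w₁ w₂ A B hA hB hAB hzA
      by_cases hw₂ : w₂ ∈ sepw x y
      · exact absurd (hT.2 w₁ h1 w₂ hw₂ (by rw [hzA, hyB]; exact hAB)) h2
      · rw [mem_sepw, not_not] at hw₂
        rw [hw₂, hyB]
    · -- w₁ ∉ T, w₂ ∈ T
      have hxB : x w₂ = B := hx.2 w₁ w₂ A B hA hB hAB hzA
      have hw₂sep : w₂ ∈ sepw x y := hT.1 h2
      rcases mem_wall_cases hP w₂ (hx.1 w₂) (hy.1 w₂) hw₂sep hB with hBx | hBy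
      · exfalso
        by_cases hw₁ : w₁ ∈ sepw x y
        · have hsub : x w₁ ⊆ x w₂ := by rw [hzA, ← hBx]; exact hAB
          have hsub' : y w₂ ⊆ y w₁ := by
            rw [sep_compl hP hx hy hw₁, sep_compl hP hx hy hw₂sep]
            exact Set.compl_subset_compl.2 hsub
          exact h1 (hT.2 w₂ h2 w₁ hw₁ hsub')
        · rw [mem_sepw, not_not] at hw₁
          have : y w₁ ⊆ x w₂ := by rw [← hw₁, hzA, ← hBx]; exact hAB
          exact not_sub_yx hx hy hw₂sep this
      · rw [hBy]
    · exact hx.2 w₁ w₂ A B hA hB hAB hzA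

lemma sep_cutUF_left {T : Set ↥P} (hT : IsCut x y T) :
    sepw x (cutUF x y T) = T := by
  ext w
  simp only [mem_sepw, cutUF]
  split_ifs with h
  · simp only [h, iff_true]
    exact hT.1 h
  · simp [h]

lemma sep_cutUF_right {T : Set ↥P} (hT : IsCut x y T) :
    sepw (cutUF x y T) y = sepw x y \ T := by
  ext w
  simp only [mem_sepw, cutUF, Set.mem_diff, mem_sepw]
  split_ifs with h
  · simp [h]
  · simp [h]

lemma sep_cutUF_cut {T T' : Set ↥P} (hT' : IsCut x y T')
    (hsub : T ⊆ T') : sepw (cutUF x y T) (cutUF x y T') = T' \ T := by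
  ext w
  simp only [mem_sepw, cutUF, Set.mem_diff]
  by_cases h : w ∈ T <;> by_cases h' : w ∈ T'
  · simp [h, h']
  · exact (h' (hsub h)).elim
  · have hxy : x w ≠ y w := hT'.1 h'
    simp [h, h', hxy]
  · simp [h, h']

end Cuts

section Glue

variable {x y : ↥P → Set S}

lemma glue_le (hP : IsWallSystem P) (hx : IsUltra P x) (hy : IsUltra P y)
    {CC : Set (Set ↥P)} {mR : ℕ}
    (hchain : ∀ c ∈ CC, IsWallChain P c) (hglue : IsGluable P CC mR)
    {c₁ c₂ : Set ↥P} (h₁ : c₁ ∈ CC) (h₂ : c₂ ∈ CC)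
    (h₁W : c₁ ⊆ sepw x y) (h₂W : c₂ ⊆ sepw x y) (hdisj : Disjoint c₁ c₂)
    (hprec : ∀ w₁ ∈ c₁, ∀ w₂ ∈ c₂, y w₁ ⊆ y w₂)
    {U : Set ↥P} (hU₁ : c₁ ⊆ U) (hU₂ : c₂ ⊆ U) :
    c₁.encard + c₂.encard ≤ chainSup CC U + (mR : ℕ∞) := by
  have horder : IsChainOrder P (fun w => y w) (c₁ ∪ c₂) := by
    constructor
    · intro w _
      exact hy.1 w
    · intro w hw w' hw'
      rcases hw with h | h <;> rcases hw' with h' | h'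
      · exact chain_y_comp hP hx hy (hchain _ h₁) h₁W h h'
      · exact Or.inl (hprec _ h _ h')
      · exact Or.inr (hprec _ h' _ h)
      · exact chain_y_comp hP hx hy (hchain _ h₂) h₂W h h'
  obtain ⟨b, hbsub, hbcard, -, -, -, hbmem⟩ :=
    hglue c₁ h₁ c₂ h₂ _ horder hdisj hprec
  have hg : ((c₁ ∪ c₂) \ b).encard ≤ chainSup CC U :=
    le_chainSup hbmem (Set.diff_subset.trans (Set.union_subset hU₁ hU₂))
  calc c₁.encard + c₂.encard = (c₁ ∪ c₂).encard := (Set.encard_union_eq hdisj).symm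
    _ ≤ ((c₁ ∪ c₂) \ b).encard + b.encard := by
        refine le_trans (Set.encard_mono ?_) (Set.encard_union_le _ _)
        intro a ha
        by_cases hab : a ∈ b
        · exact Or.inr hab
        · exact Or.inl ⟨ha, hab⟩
    _ ≤ chainSup CC U + (mR : ℕ∞) := add_le_add hg hbcard

lemma cut_superadd (hP : IsWallSystem P) (hx : IsUltra P x) (hy : IsUltra P y)
    {CC : Set (Set ↥P)} {LR mR : ℕ} (hdual : IsDualisable P CC)
    (hchain : ∀ c ∈ CC, IsWallChain P c) (hglue : IsGluable P CC mR)
    (hsep : IsSeparated P CC LR)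
    {T : Set ↥P} (hT : IsCut x y T)
    {c₁ c₂ : Set ↥P} (h₁ : c₁ ∈ CC) (h₁T : c₁ ⊆ T)
    (h₂ : c₂ ∈ CC) (h₂W : c₂ ⊆ sepw x y \ T) (h₂fin : c₂.Finite) :
    c₁.encard + c₂.encard ≤ chainSup CC (sepw x y) + ((LR : ℕ∞) + (mR : ℕ∞) + 1) := by
  have h₁sep : c₁ ⊆ sepw x y := h₁T.trans hT.1
  have h₂sep : c₂ ⊆ sepw x y := h₂W.trans Set.diff_subset
  have h1c : c₁.encard ≤ chainSup CC (sepw x y) := le_chainSup h₁ h₁sep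
  by_cases h₂e : c₂ = ∅
  · subst h₂e
    simp only [Set.encard_empty, add_zero]
    exact le_trans h1c le_self_add
  have h₂ne : c₂.Nonempty := Set.nonempty_iff_ne_empty.2 h₂e
  obtain ⟨kq, hkq, hkqmax⟩ :=
    Set.Finite.exists_maximalFor (fun w => y w) c₂ h₂fin h₂ne
  have hkqtop : ∀ k ∈ c₂, y k ⊆ y kq := by
    intro k hk
    rcases chain_y_comp hP hx hy (hchain _ h₂) h₂sep hk hkq with h | h
    · exact h
    · exact hkqmax hk h
  by_cases hsing : c₂ ⊆ {kq}
  · have h2c : c₂.encard ≤ 1 := le_trans (Set.encard_mono hsing) (by simp)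
    calc c₁.encard + c₂.encard ≤ chainSup CC (sepw x y) + 1 := add_le_add h1c h2c
      _ ≤ _ := add_le_add_right le_add_self _
  have hd2ne : (c₂ \ {kq}).Nonempty := by
    rw [Set.diff_nonempty]
    simpa using hsing
  obtain ⟨k2, hk2, hk2max⟩ :=
    Set.Finite.exists_maximalFor (fun w => y w) (c₂ \ {kq})
      (h₂fin.subset Set.diff_subset) hd2ne
  have hk2mem : k2 ∈ c₂ := hk2.1
  have hk2ne : k2 ≠ kq := by
    intro h
    exact hk2.2 (by simp [h])
  have hk2top : ∀ k ∈ c₂ \ {kq}, y k ⊆ y k2 := by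
    intro k hk
    rcases chain_y_comp hP hx hy (hchain _ h₂) h₂sep hk.1 hk2mem with h | h
    · exact h
    · exact hk2max hk h
  set Cr := {w ∈ c₁ | Crosses P w k2 ∧ Crosses P w kq} with hCrdef
  have hCrsub : Cr ⊆ c₁ := fun w hw => hw.1
  have hCrmem : Cr ∈ CC := hdual.subset_mem c₁ h₁ _ hCrsub
  have hpair : ({k2, kq} : Set ↥P) ∈ CC := by
    refine hdual.subset_mem c₂ h₂ _ ?_
    exact Set.insert_subset hk2mem (Set.singleton_subset_iff.2 hkq)
  have hCrL : Cr.encard ≤ (LR : ℕ∞) :=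
    hsep k2 kq hk2ne hpair Cr hCrmem (fun w hw => hw.2)
  set c₁' := c₁ \ Cr with hc₁'def
  set c₂' := c₂ \ {kq} with hc₂'def
  have hpro : ∀ w ∈ c₁, ∀ k ∈ sepw x y \ T, ∀ k' ∈ sepw x y \ T,
      y k ⊆ y k' → Crosses P w k → Crosses P w k' := by
    intro w hw k hk k' hk' hkk' hcr
    by_contra hnc
    rcases cross_or_comp hP hx hy (hT.1 (h₁T hw)) hk'.1 hnc with h | h
    · exact hk'.2 (hT.2 w (h₁T hw) k' hk'.1 h)
    · exact (not_cross_of_le hP hx hy (hT.1 (h₁T hw)) (hkk'.trans h))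
        (cross_symm hcr)
  have hnocross : ∀ w ∈ c₁', ∀ k ∈ c₂', ¬ Crosses P w k := by
    intro w hw k hk hcr
    have h2' : Crosses P w k2 :=
      hpro w hw.1 k (h₂W hk.1) k2 (h₂W hk2mem) (hk2top k hk) hcr
    have h3' : Crosses P w kq :=
      hpro w hw.1 k2 (h₂W hk2mem) kq (h₂W hkq) (hkqtop k2 hk2mem) h2'
    exact hw.2 ⟨hw.1, h2', h3'⟩
  have hprec : ∀ k ∈ c₂', ∀ w ∈ c₁', y k ⊆ y w := by
    intro k hk w hw
    have hknc : ¬ Crosses P k w := fun hcr => hnocross w hw k hk (cross_symm hcr)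
    rcases cross_or_comp hP hx hy (h₂W hk.1).1 (hT.1 (h₁T hw.1)) hknc with h | h
    · exact h
    · exact absurd (hT.2 w (h₁T hw.1) k (h₂W hk.1).1 h) (h₂W hk.1).2
  have hdisj : Disjoint c₂' c₁' := by
    rw [Set.disjoint_left]
    intro a ha hb
    exact (h₂W ha.1).2 (h₁T hb.1)
  have hglued : c₂'.encard + c₁'.encard ≤ chainSup CC (sepw x y) + (mR : ℕ∞) :=
    glue_le hP hx hy hchain hglue
      (hdual.subset_mem _ h₂ _ Set.diff_subset)
      (hdual.subset_mem _ h₁ _ Set.diff_subset)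
      (Set.diff_subset.trans h₂sep) (Set.diff_subset.trans h₁sep)
      hdisj hprec
      (Set.diff_subset.trans h₂sep) (Set.diff_subset.trans h₁sep)
  have hc1 : c₁.encard ≤ c₁'.encard + Cr.encard := by
    refine le_trans (Set.encard_mono ?_) (Set.encard_union_le _ _)
    intro a ha
    by_cases h : a ∈ Cr
    · exact Or.inr h
    · exact Or.inl ⟨ha, h⟩
  have hsub2 : c₂ ⊆ c₂' ∪ {kq} := by
    intro a ha
    by_cases h : a ∈ ({kq} : Set ↥P)
    · exact Or.inr h
    · exact Or.inl ⟨ha, h⟩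
  have hc2 : c₂.encard ≤ c₂'.encard + 1 := by
    have h' := (Set.encard_mono hsub2).trans (Set.encard_union_le _ _)
    simpa using h'
  calc c₁.encard + c₂.encard
      ≤ (c₁'.encard + Cr.encard) + (c₂'.encard + 1) := add_le_add hc1 hc2
    _ ≤ (c₁'.encard + (LR : ℕ∞)) + (c₂'.encard + 1) :=
        add_le_add (add_le_add_right hCrL _) le_rfl
    _ = (c₂'.encard + c₁'.encard) + ((LR : ℕ∞) + 1) := by ring
    _ ≤ (chainSup CC (sepw x y) + (mR : ℕ∞)) + ((LR : ℕ∞) + 1) :=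
        add_le_add hglued le_rfl
    _ = chainSup CC (sepw x y) + ((LR : ℕ∞) + (mR : ℕ∞) + 1) := by ring

end Glue

section Triangle

lemma wallDist_triangle {CC : Set (Set ↥P)} (hdual : IsDualisable P CC)
    (u v t : ↥P → Set S) :
    wallDist P CC u t ≤ wallDist P CC u v + wallDist P CC v t := by
  rw [wallDist_eq_chainSup, wallDist_eq_chainSup, wallDist_eq_chainSup]
  apply chainSup_le
  intro c hc hcsub
  have hsplit : c ⊆ {w ∈ c | u w ≠ v w} ∪ {w ∈ c | v w ≠ t w} := by
    intro w hw
    by_cases h : u w = v w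
    · exact Or.inr ⟨hw, fun hvt => (hcsub hw) (h.trans hvt)⟩
    · exact Or.inl ⟨hw, h⟩
  calc c.encard ≤ _ := (Set.encard_mono hsplit).trans (Set.encard_union_le _ _)
    _ ≤ chainSup CC (sepw u v) + chainSup CC (sepw v t) := by
        refine add_le_add ?_ ?_
        · exact le_chainSup (hdual.subset_mem c hc _ (fun w hw => hw.1))
            (fun w hw => hw.2)
        · exact le_chainSup (hdual.subset_mem c hc _ (fun w hw => hw.1))
            (fun w hw => hw.2)

lemma wallDist_self (CC : Set (Set ↥P)) (u : ↥P → Set S) :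
    wallDist P CC u u = 0 := by
  rw [wallDist_eq_chainSup]
  refine le_antisymm (chainSup_le ?_) zero_le
  intro c _ hcU
  have : c = ∅ := by
    ext w
    simp only [Set.mem_empty_iff_false, iff_false]
    intro hw
    exact (hcU hw) rfl
  simp [this]

end Triangle

section Graded

open scoped ENNReal

lemma sepw_comm (u v : ↥P → Set S) : sepw u v = sepw v u := by
  ext w
  exact ne_comm

lemma gradedDist_congr (C : ℕ → Set (Set ↥P)) (lam : ℕ → ℝ≥0∞)
    {u v : ↥P → Set S} {U : Set ↥P} (h : sepw u v = U) :
    gradedDist P C lam u v = ∑' R, lam R * ((chainSup (C R) U : ℕ∞) : ℝ≥0∞) := by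
  unfold gradedDist
  simp only [wallDist_eq_chainSup, h]

lemma gradedDist_self (C : ℕ → Set (Set ↥P)) (lam : ℕ → ℝ≥0∞) (u : ↥P → Set S) :
    gradedDist P C lam u u = 0 := by
  unfold gradedDist
  simp [wallDist_self]

lemma gradedDist_triangle {C : ℕ → Set (Set ↥P)} {lam : ℕ → ℝ≥0∞}
    (hdual : ∀ R, IsDualisable P (C R)) (u v t : ↥P → Set S) :
    gradedDist P C lam u t ≤ gradedDist P C lam u v + gradedDist P C lam v t := by
  unfold gradedDist
  rw [← ENNReal.tsum_add]
  refine ENNReal.tsum_le_tsum fun R => ?_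
  rw [← mul_add]
  refine mul_le_mul_right ?_ _
  rw [← ENat.toENNReal_add]
  exact ENat.toENNReal_le.2 (wallDist_triangle (hdual R) u v t)

end Graded

end RGAux

end WallDuality

namespace WallDuality

open scoped ENNReal

/-- **Graded duals are weakly roughly geodesic** (Proposition 5.14): if the
gluing constants of a graded system are bounded by `M`, then the graded dual is
`4MΛ`-weakly roughly geodesic. -/
theorem graded_dual_weakly_roughly_geodesic
    {S : Type*} (P : Set (Set (Set S)))
    (hP : IsWallSystem P)
    (C : ℕ → Set (Set ↥P)) (L m : ℕ → ℕ) (κ lam : ℕ → ℝ≥0∞)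
    (hgraded : IsGradedSystem P C L m κ)
    (M : ℕ) (hM : 1 ≤ M) (hmM : ∀ R, m R ≤ M)
    (hlam_pos : ∀ R, 0 < lam R) (hlam_le : ∀ R, lam R ≤ κ R)
    (Λ : ℝ≥0∞)
    (hΛ : Λ = ∑' R, lam R * ((L R : ℝ≥0∞) + (m R : ℝ≥0∞) + 1))
    (hΛ_fin : Λ ≠ ⊤) :
    ∀ x ∈ gradedSpace P C lam, ∀ y ∈ gradedSpace P C lam,
      ∃ (n : ℕ) (z : ℕ → (↥P → Set S)),
        z 0 = x ∧ z n = y ∧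
        (∀ r ≤ n, z r ∈ gradedSpace P C lam) ∧
        (∀ r < n, gradedDist P C lam (z r) (z (r + 1)) ≤ 4 * (M : ℝ≥0∞) * Λ) ∧
        (∀ r ≤ n, gradedDist P C lam x (z r) + gradedDist P C lam (z r) y
          ≤ gradedDist P C lam x y + 4 * (M : ℝ≥0∞) * Λ) := by
  intro x hxmem y hymem
  obtain ⟨hx, hxfin⟩ := hxmem
  obtain ⟨hy, hyfin⟩ := hymem
  by_cases hxy : x = y
  · refine ⟨0, fun _ => x, rfl, hxy ▸ rfl, fun r _ => ⟨hx, hxfin⟩, fun r hr => absurd hr (Nat.not_lt_zero r), fun r _ => ?_⟩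
    rw [gradedDist_self]
    rw [zero_add]
    exact le_self_add
  -- nontrivial case
  have hPne : Nonempty ↥P := by
    by_contra h
    exact hxy (funext fun w => absurd ⟨w⟩ h)
  have hS : Nonempty S := by
    by_contra h
    refine hxy (funext fun w => ?_)
    refine subset_antisymm (fun s _ => absurd ⟨s⟩ h) (fun s _ => absurd ⟨s⟩ h)
  obtain ⟨s₀⟩ := hS
  obtain ⟨w₀⟩ := hPne
  have hdual : ∀ R, IsDualisable P (C R) := fun R => (hgraded.chain R).1
  have hch : ∀ R, ∀ c ∈ C R, IsWallChain P c := fun R => (hgraded.chain R).2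
  have hempty_mem : ∀ R, (∅ : Set ↥P) ∈ C R := fun R =>
    (hdual R).subset_mem _ ((hdual R).singleton_mem w₀) ∅ (empty_subset _)
  have hlam_ne : ∀ R, lam R ≠ 0 := fun R => (hlam_pos R).ne'
  -- finiteness of scalewise distances to principal ultrafilters
  have hterm : ∀ (u : ↥P → Set S), gradedDist P C lam u (principalUF P s₀) ≠ ⊤ →
      ∀ R, wallDist P (C R) u (principalUF P s₀) ≠ ⊤ := by
    intro u hu R
    have h1 : lam R * ((wallDist P (C R) u (principalUF P s₀) : ℕ∞) : ℝ≥0∞) ≠ ⊤ :=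
      ENNReal.ne_top_of_tsum_ne_top hu R
    intro htop
    rw [htop] at h1
    simp [ENNReal.mul_eq_top, hlam_ne R] at h1
  -- scalewise distances between x and y are finite
  have hdfin : ∀ R, chainSup (C R) (sepw x y) ≠ ⊤ := by
    intro R
    have h1 : wallDist P (C R) x y ≤
        wallDist P (C R) x (principalUF P s₀) + wallDist P (C R) (principalUF P s₀) y :=
      wallDist_triangle (hdual R) x (principalUF P s₀) y
    have h2 : wallDist P (C R) x (principalUF P s₀) ≠ ⊤ := hterm x (hxfin s₀) R
    have h3 : wallDist P (C R) (principalUF P s₀) y ≠ ⊤ := by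
      rw [wallDist_eq_chainSup, sepw_comm, ← wallDist_eq_chainSup]
      exact hterm y (hyfin s₀) R
    rw [wallDist_eq_chainSup] at h1 h2 h3
    intro htop
    rw [htop] at h1
    exact (WithTop.add_ne_top.2 ⟨h2, h3⟩) (top_le_iff.1 h1)
  -- finiteness of chains
  have hfinchain : ∀ R, ∀ c ∈ C R, c ⊆ sepw x y → c.Finite := by
    intro R c hc hcW
    rw [← Set.encard_ne_top_iff]
    intro htop
    exact hdfin R (top_le_iff.1 (htop ▸ le_chainSup hc hcW))
  -- the total distance between x and y is finite
  have hD : gradedDist P C lam x y =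
      ∑' R, lam R * ((chainSup (C R) (sepw x y) : ℕ∞) : ℝ≥0∞) :=
    gradedDist_congr C lam rfl
  have hDfin : gradedDist P C lam x y ≠ ⊤ := by
    have h1 := gradedDist_triangle (lam := lam) hdual x (principalUF P s₀) y
    have h2 : gradedDist P C lam (principalUF P s₀) y ≠ ⊤ := by
      rw [gradedDist_congr C lam (sepw_comm (principalUF P s₀) y),
        ← gradedDist_congr C lam rfl]
      exact hyfin s₀
    exact ne_top_of_le_ne_top (ENNReal.add_ne_top.2 ⟨hxfin s₀, h2⟩) h1
  -- the up-sets and the height function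
  set up : ↥P → Set ↥P := fun w => {w' | w' ∈ sepw x y ∧ y w ⊆ y w'} with hupdef
  have hupW : ∀ w, up w ⊆ sepw x y := fun w w' hw' => hw'.1
  have hup_mono : ∀ w w', y w ⊆ y w' → up w' ⊆ up w := by
    intro w w' hww' a ha
    exact ⟨ha.1, hww'.trans ha.2⟩
  set hfun : ↥P → ℝ≥0∞ := fun w => ∑' R, lam R * ((chainSup (C R) (up w) : ℕ∞) : ℝ≥0∞)
    with hfundef
  have hupfin : ∀ R w, chainSup (C R) (up w) ≠ ⊤ := fun R w =>
    ne_top_of_le_ne_top (hdfin R) (chainSup_mono _ (hupW w))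
  have hfun_mono : ∀ w w', y w ⊆ y w' → hfun w' ≤ hfun w := by
    intro w w' h
    refine ENNReal.tsum_le_tsum fun R => mul_le_mul_right ?_ _
    exact ENat.toENNReal_le.2 (chainSup_mono _ (hup_mono w w' h))
  have hfun_le : ∀ w, hfun w ≤ gradedDist P C lam x y := by
    intro w
    rw [hD]
    refine ENNReal.tsum_le_tsum fun R => mul_le_mul_right ?_ _
    exact ENat.toENNReal_le.2 (chainSup_mono _ (hupW w))
  have hfun_pos : ∀ w ∈ sepw x y, 0 < hfun w := by
    intro w hw
    have h1 : ({w} : Set ↥P).encard ≤ chainSup (C 0) (up w) :=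
      le_chainSup ((hdual 0).singleton_mem w)
        (by intro a ha; rw [ha]; exact ⟨hw, subset_rfl⟩)
    rw [Set.encard_singleton] at h1
    have h2 : lam 0 * 1 ≤ lam 0 * ((chainSup (C 0) (up w) : ℕ∞) : ℝ≥0∞) := by
      refine mul_le_mul_right ?_ _
      exact_mod_cast ENat.toENNReal_le.2 h1
    rw [mul_one] at h2
    calc (0 : ℝ≥0∞) < lam 0 := hlam_pos 0
      _ ≤ _ := h2.trans (ENNReal.le_tsum 0)
  -- the key superadditivity of chainSup along up-sets
  have hkey : ∀ R (w₁ wp : ↥P) (c : Set ↥P), c ∈ C R → c ⊆ sepw x y →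
      w₁ ∈ c → wp ∈ c → (∀ w ∈ c, y w₁ ⊆ y w ∧ y w ⊆ y wp) →
      chainSup (C R) (up wp) + (c \ {wp}).encard
        ≤ chainSup (C R) (up w₁) + (m R : ℕ∞) := by
    intro R w₁ wp c hc hcW hw₁ hwp hcomp
    obtain ⟨c₀, hc₀mem, hc₀sub, hc₀card⟩ :=
      chainSup_exists_max (hempty_mem R) (hupfin R wp)
    have hdisj : Disjoint (c \ {wp}) c₀ := by
      rw [Set.disjoint_left]
      intro a ha ha₀
      have h1 : y a ⊆ y wp := (hcomp a ha.1).2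
      have h2 : y wp ⊆ y a := (hc₀sub ha₀).2
      exact ha.2 (sep_antisymm hP hy (subset_antisymm h1 h2))
    have hprec : ∀ a ∈ c \ {wp}, ∀ b ∈ c₀, y a ⊆ y b := by
      intro a ha b hb
      exact ((hcomp a ha.1).2).trans (hc₀sub hb).2
    have hup₁ : c \ {wp} ⊆ up w₁ := by
      intro a ha
      exact ⟨hcW ha.1, (hcomp a ha.1).1⟩
    have hup₂ : c₀ ⊆ up w₁ := by
      refine subset_trans hc₀sub (hup_mono w₁ wp ?_)
      exact (hcomp wp hwp).1
    have hglued := glue_le hP hx hy (hch R) (hgraded.gluable R)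
      ((hdual R).subset_mem _ hc _ Set.diff_subset) hc₀mem
      (Set.diff_subset.trans hcW) (hc₀sub.trans (hupW wp))
      hdisj hprec hup₁ hup₂
    rw [hc₀card] at hglued
    calc chainSup (C R) (up wp) + (c \ {wp}).encard
        = (c \ {wp}).encard + chainSup (C R) (up wp) := add_comm _ _
      _ ≤ _ := hglued
  -- ℝ≥0∞ version of the key superadditivity, at the level of hfun
  have hH : ∀ R (w₁ wp : ↥P) (c : Set ↥P), c ∈ C R → c ⊆ sepw x y →
      w₁ ∈ c → wp ∈ c → (∀ w ∈ c, y w₁ ⊆ y w ∧ y w ⊆ y wp) →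
      hfun wp + lam R * (((c \ {wp}).encard : ℕ∞) : ℝ≥0∞)
        ≤ hfun w₁ + lam R * (m R : ℝ≥0∞) := by
    intro R w₁ wp c hc hcW hw₁ hwp hcomp
    have hkey' := hkey R w₁ wp c hc hcW hw₁ hwp hcomp
    have hsum1 : hfun wp + lam R * (((c \ {wp}).encard : ℕ∞) : ℝ≥0∞) =
        ∑' R', (lam R' * ((chainSup (C R') (up wp) : ℕ∞) : ℝ≥0∞) +
          (if R' = R then lam R * (((c \ {wp}).encard : ℕ∞) : ℝ≥0∞) else 0)) := by
      rw [ENNReal.tsum_add, tsum_ite_eq]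
    have hsum2 : hfun w₁ + lam R * (m R : ℝ≥0∞) =
        ∑' R', (lam R' * ((chainSup (C R') (up w₁) : ℕ∞) : ℝ≥0∞) +
          (if R' = R then lam R * (m R : ℝ≥0∞) else 0)) := by
      rw [ENNReal.tsum_add, tsum_ite_eq]
    rw [hsum1, hsum2]
    refine ENNReal.tsum_le_tsum fun R' => ?_
    by_cases hR' : R' = R
    · subst hR'
      simp only [eq_self_iff_true, if_true]
      rw [← mul_add, ← mul_add]
      refine mul_le_mul_right ?_ _
      rw [← ENat.toENNReal_add]
      have : ((m R' : ℕ∞) : ℝ≥0∞) = (m R' : ℝ≥0∞) := ENat.toENNReal_coe _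
      rw [← this, ← ENat.toENNReal_add]
      exact ENat.toENNReal_le.2 hkey'
    · simp only [if_neg hR', add_zero]
      refine mul_le_mul_right ?_ _
      refine ENat.toENNReal_le.2 (chainSup_mono _ (hup_mono w₁ wp ?_))
      exact (hcomp wp hwp).1  -- annulus bound for a single chain
  have hann : ∀ R (t ε' : ℝ≥0∞), t ≠ ⊤ → ∀ c ∈ C R,
      c ⊆ {w | w ∈ sepw x y ∧ t < hfun w ∧ hfun w ≤ t + ε'} →
      lam R * ((c.encard : ℕ∞) : ℝ≥0∞) ≤ ε' + lam R * ((m R : ℝ≥0∞) + 1) := by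
    intro R t ε' ht c hc hcann
    have hcW : c ⊆ sepw x y := fun w hw => (hcann hw).1
    by_cases hce : c = ∅
    · subst hce
      simp
    have hcne : c.Nonempty := Set.nonempty_iff_ne_empty.2 hce
    have hcfin : c.Finite := hfinchain R c hc hcW
    obtain ⟨w₁, hw₁, hw₁min⟩ :=
      Set.Finite.exists_minimalFor (fun w => y w) c hcfin hcne
    obtain ⟨wp, hwp, hwpmax⟩ :=
      Set.Finite.exists_maximalFor (fun w => y w) c hcfin hcne
    have hcomp : ∀ w ∈ c, y w₁ ⊆ y w ∧ y w ⊆ y wp := by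
      intro w hw
      constructor
      · rcases chain_y_comp hP hx hy (hch R c hc) hcW hw₁ hw with h | h
        · exact h
        · exact hw₁min hw h
      · rcases chain_y_comp hP hx hy (hch R c hc) hcW hw hwp with h | h
        · exact h
        · exact hwpmax hw h
    have hHc := hH R w₁ wp c hc hcW hw₁ hwp hcomp
    have h1 : hfun w₁ ≤ t + ε' := (hcann hw₁).2.2
    have h2 : t ≤ hfun wp := le_of_lt (hcann hwp).2.1
    have hstep1 : t + lam R * (((c \ {wp}).encard : ℕ∞) : ℝ≥0∞)
        ≤ t + (ε' + lam R * (m R : ℝ≥0∞)) := by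
      calc t + lam R * (((c \ {wp}).encard : ℕ∞) : ℝ≥0∞)
          ≤ hfun wp + lam R * (((c \ {wp}).encard : ℕ∞) : ℝ≥0∞) :=
            add_le_add_left h2 _
        _ ≤ hfun w₁ + lam R * (m R : ℝ≥0∞) := hHc
        _ ≤ (t + ε') + lam R * (m R : ℝ≥0∞) := add_le_add_left h1 _
        _ = t + (ε' + lam R * (m R : ℝ≥0∞)) := by ring
    have hstep2 : lam R * (((c \ {wp}).encard : ℕ∞) : ℝ≥0∞)
        ≤ ε' + lam R * (m R : ℝ≥0∞) :=
      (ENNReal.add_le_add_iff_left ht).1 hstep1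
    have hcsub : c.encard ≤ (c \ {wp}).encard + 1 := by
      have hsub : c ⊆ (c \ {wp}) ∪ {wp} := by
        intro a ha
        by_cases h : a ∈ ({wp} : Set ↥P)
        · exact Or.inr h
        · exact Or.inl ⟨ha, h⟩
      have h' := (Set.encard_mono hsub).trans (Set.encard_union_le _ _)
      simpa using h'
    calc lam R * ((c.encard : ℕ∞) : ℝ≥0∞)
        ≤ lam R * ((((c \ {wp}).encard + 1 : ℕ∞)) : ℝ≥0∞) := by
          refine mul_le_mul_right ?_ _
          exact ENat.toENNReal_le.2 hcsub
      _ = lam R * (((c \ {wp}).encard : ℕ∞) : ℝ≥0∞) + lam R := by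
          rw [ENat.toENNReal_add, mul_add]
          simp
      _ ≤ (ε' + lam R * (m R : ℝ≥0∞)) + lam R := add_le_add_left hstep2 _
      _ = ε' + lam R * ((m R : ℝ≥0∞) + 1) := by ring
  -- annulus bound at the level of chainSup
  have hannS : ∀ R (t ε' : ℝ≥0∞), t ≠ ⊤ →
      ∀ U : Set ↥P, U ⊆ {w | w ∈ sepw x y ∧ t < hfun w ∧ hfun w ≤ t + ε'} →
      lam R * ((chainSup (C R) U : ℕ∞) : ℝ≥0∞) ≤ ε' + lam R * ((m R : ℝ≥0∞) + 1) := by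
    intro R t ε' ht U hU
    have hUW : U ⊆ sepw x y := fun w hw => (hU hw).1
    have hUfin : chainSup (C R) U ≠ ⊤ :=
      ne_top_of_le_ne_top (hdfin R) (chainSup_mono _ hUW)
    obtain ⟨c₀, hc₀mem, hc₀sub, hc₀card⟩ := chainSup_exists_max (hempty_mem R) hUfin
    rw [← hc₀card]
    exact hann R t ε' ht c₀ hc₀mem (hc₀sub.trans hU)  -- Λ is positive
  have hΛ_pos : 0 < Λ := by
    rw [hΛ]
    refine lt_of_lt_of_le ?_ (ENNReal.le_tsum 0)
    have h1 : (1 : ℝ≥0∞) ≤ (L 0 : ℝ≥0∞) + (m 0 : ℝ≥0∞) + 1 := le_add_self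
    calc (0 : ℝ≥0∞) < lam 0 * 1 := by simpa using hlam_pos 0
      _ ≤ _ := mul_le_mul_right h1 _
  -- choose the scale cutoff R₀
  set f : ℕ → ℝ≥0∞ := fun R => lam R * ((chainSup (C R) (sepw x y) : ℕ∞) : ℝ≥0∞)
    with hfdef
  have hfsum : ∑' R, f R = gradedDist P C lam x y := hD.symm
  obtain ⟨R₀, hR₀pos, htail⟩ : ∃ R₀ : ℕ, 0 < R₀ ∧ ∑' i, f (i + R₀) ≤ Λ := by
    by_cases hDΛ : gradedDist P C lam x y ≤ Λ
    · refine ⟨1, Nat.one_pos, ?_⟩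
      have h1 : ∑' i, f (i + 1) ≤ ∑' R, f R := by
        rw [← Summable.sum_add_tsum_nat_add' (f := f) (k := 1) ENNReal.summable]
        exact le_add_self
      exact h1.trans (hfsum.le.trans hDΛ)
    · push_neg at hDΛ
      set D := gradedDist P C lam x y with hDdef
      have hδpos : 0 < D - Λ := tsub_pos_of_lt hDΛ
      have hδlt : D - Λ < D := ENNReal.sub_lt_self hDfin (hΛ_pos.trans hDΛ).ne' hΛ_pos.ne'
      have hiSup : D = ⨆ N, ∑ i ∈ Finset.range N, f i := by
        rw [← hfsum, ENNReal.tsum_eq_iSup_nat]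
      obtain ⟨N, hN⟩ : ∃ N, D - Λ < ∑ i ∈ Finset.range N, f i :=
        lt_iSup_iff.1 (lt_of_lt_of_le hδlt (le_of_eq hiSup))
      have hNpos : 0 < N := by
        rcases Nat.eq_zero_or_pos N with h | h
        · subst h
          simp at hN
        · exact h
      refine ⟨N, hNpos, ?_⟩
      by_contra htail'
      push_neg at htail'
      have hpartial : ∑ i ∈ Finset.range N, f i + ∑' i, f (i + N) = D := by
        rw [Summable.sum_add_tsum_nat_add' (f := f) (k := N) ENNReal.summable, hfsum]
      have : (D - Λ) + Λ < D := by
        calc (D - Λ) + Λ < ∑ i ∈ Finset.range N, f i + ∑' i, f (i + N) :=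
            ENNReal.add_lt_add hN htail'
          _ = D := hpartial
      rw [tsub_add_cancel_of_le hDΛ.le] at this
      exact lt_irrefl D this
  -- the mesh
  set ε : ℝ≥0∞ := Λ / (R₀ : ℝ≥0∞) with hεdef
  have hR₀ne : (R₀ : ℝ≥0∞) ≠ 0 := by
    exact_mod_cast hR₀pos.ne'
  have hε0 : ε ≠ 0 := by
    rw [hεdef]
    simp [ENNReal.div_eq_zero_iff, hΛ_pos.ne', ENNReal.natCast_ne_top]
  have hεtop : ε ≠ ⊤ := by
    rw [hεdef]
    simp [ENNReal.div_eq_top, hR₀ne, hΛ_fin]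
  -- the number of steps
  obtain ⟨n, hn⟩ : ∃ n : ℕ, gradedDist P C lam x y / ε < n := by
    refine ENNReal.exists_nat_gt ?_
    simp [Ne, ENNReal.div_eq_top, hε0, hDfin]
  have hDn : gradedDist P C lam x y ≤ (n : ℝ≥0∞) * ε := by
    have h1 : gradedDist P C lam x y / ε * ε = gradedDist P C lam x y :=
      ENNReal.div_mul_cancel hε0 hεtop
    calc gradedDist P C lam x y = gradedDist P C lam x y / ε * ε := h1.symm
      _ ≤ (n : ℝ≥0∞) * ε := mul_le_mul_left hn.le _
  -- the cuts
  set T : ℕ → Set ↥P := fun r => {w | w ∈ sepw x y ∧ hfun w ≤ (r : ℝ≥0∞) * ε}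
    with hTdef
  have hcut : ∀ r, IsCut x y (T r) := by
    intro r
    constructor
    · exact fun w hw => hw.1
    · intro w hw w' hw' hsub
      exact ⟨hw', (hfun_mono w w' hsub).trans hw.2⟩
  have hTmono : ∀ r, T r ⊆ T (r + 1) := by
    intro r w hw
    refine ⟨hw.1, hw.2.trans (mul_le_mul_left ?_ _)⟩
    exact_mod_cast Nat.cast_le.2 (Nat.le_succ r)
  have hT0 : T 0 = ∅ := by
    ext w
    simp only [hTdef, Set.mem_setOf_eq, Set.mem_empty_iff_false, iff_false, not_and]
    intro hw hle
    refine (hfun_pos w hw).not_ge ?_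
    simpa using hle
  have hTn : ∀ w ∈ sepw x y, w ∈ T n := by
    intro w hw
    exact ⟨hw, (hfun_le w).trans hDn⟩
  -- the path
  set z : ℕ → (↥P → Set S) := fun r => cutUF x y (T r) with hzdef
  have hz0 : z 0 = x := by
    funext w
    simp [hzdef, cutUF, hT0]
  have hzn : z n = y := by
    funext w
    simp only [hzdef, cutUF]
    by_cases hw : w ∈ sepw x y
    · rw [if_pos (hTn w hw)]
    · rw [mem_sepw, not_not] at hw
      split_ifs <;> simp [hw]
  -- distance formulas
  have hdxz : ∀ r, gradedDist P C lam x (z r) =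
      ∑' R, lam R * ((chainSup (C R) (T r) : ℕ∞) : ℝ≥0∞) :=
    fun r => gradedDist_congr C lam (sep_cutUF_left (hcut r))
  have hdzy : ∀ r, gradedDist P C lam (z r) y =
      ∑' R, lam R * ((chainSup (C R) (sepw x y \ T r) : ℕ∞) : ℝ≥0∞) :=
    fun r => gradedDist_congr C lam (sep_cutUF_right (hcut r))
  have hdzz : ∀ r, gradedDist P C lam (z r) (z (r + 1)) =
      ∑' R, lam R * ((chainSup (C R) (T (r + 1) \ T r) : ℕ∞) : ℝ≥0∞) :=
    fun r => gradedDist_congr C lam (sep_cutUF_cut (hcut (r + 1)) (hTmono r))  -- membership of the path in the graded dual space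
  have hmem : ∀ r, z r ∈ gradedSpace P C lam := by
    intro r
    refine ⟨cutUF_isUltra hP hx hy (hcut r), fun s => ?_⟩
    have h1 : gradedDist P C lam (z r) (principalUF P s) ≤
        gradedDist P C lam (z r) x + gradedDist P C lam x (principalUF P s) :=
      gradedDist_triangle hdual _ _ _
    have h2 : gradedDist P C lam (z r) x ≤ gradedDist P C lam x y := by
      rw [gradedDist_congr C lam ((sepw_comm (z r) x).trans (sep_cutUF_left (hcut r))),
        hD]
      refine ENNReal.tsum_le_tsum fun R => mul_le_mul_right ?_ _
      exact ENat.toENNReal_le.2 (chainSup_mono _ (hcut r).1)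
    exact ne_top_of_le_ne_top
      (ENNReal.add_ne_top.2 ⟨ne_top_of_le_ne_top hDfin h2, hxfin s⟩) h1
  -- Λ against the target constant
  have hΛ4 : Λ ≤ 4 * (M : ℝ≥0∞) * Λ := by
    have hM' : (1 : ℝ≥0∞) ≤ (M : ℝ≥0∞) := by exact_mod_cast hM
    have h1 : (1 : ℝ≥0∞) ≤ 4 * (M : ℝ≥0∞) := by
      calc (1 : ℝ≥0∞) ≤ 4 * 1 := by norm_num
        _ ≤ 4 * (M : ℝ≥0∞) := mul_le_mul_right hM' _
    calc Λ = 1 * Λ := (one_mul Λ).symm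
      _ ≤ 4 * (M : ℝ≥0∞) * Λ := mul_le_mul_left h1 _
  -- per-point quasi-geodesic estimate
  have hpoint : ∀ r, gradedDist P C lam x (z r) + gradedDist P C lam (z r) y
      ≤ gradedDist P C lam x y + 4 * (M : ℝ≥0∞) * Λ := by
    intro r
    rw [hdxz r, hdzy r, ← ENNReal.tsum_add]
    have hscale : ∀ R,
        lam R * ((chainSup (C R) (T r) : ℕ∞) : ℝ≥0∞) +
          lam R * ((chainSup (C R) (sepw x y \ T r) : ℕ∞) : ℝ≥0∞)
        ≤ f R + lam R * ((L R : ℝ≥0∞) + (m R : ℝ≥0∞) + 1) := by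
      intro R
      have hfinT : chainSup (C R) (T r) ≠ ⊤ :=
        ne_top_of_le_ne_top (hdfin R) (chainSup_mono _ (hcut r).1)
      have hfinT' : chainSup (C R) (sepw x y \ T r) ≠ ⊤ :=
        ne_top_of_le_ne_top (hdfin R) (chainSup_mono _ Set.diff_subset)
      obtain ⟨c₁, hc₁mem, hc₁sub, hc₁card⟩ := chainSup_exists_max (hempty_mem R) hfinT
      obtain ⟨c₂, hc₂mem, hc₂sub, hc₂card⟩ := chainSup_exists_max (hempty_mem R) hfinT'
      have hc₂fin : c₂.Finite :=
        hfinchain R c₂ hc₂mem (hc₂sub.trans Set.diff_subset)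
      have hkey2 := cut_superadd hP hx hy (hdual R) (hch R) (hgraded.gluable R)
        (hgraded.separated R) (hcut r) hc₁mem hc₁sub hc₂mem hc₂sub hc₂fin
      rw [hc₁card, hc₂card] at hkey2
      rw [hfdef]
      simp only
      rw [← mul_add, ← mul_add]
      refine mul_le_mul_right ?_ _
      have hcast : ((chainSup (C R) (sepw x y) : ℕ∞) : ℝ≥0∞) +
          ((L R : ℝ≥0∞) + (m R : ℝ≥0∞) + 1) =
          (((chainSup (C R) (sepw x y) + ((L R : ℕ∞) + (m R : ℕ∞) + 1)) : ℕ∞) : ℝ≥0∞) := by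
        push_cast
        rfl
      rw [hcast, ← ENat.toENNReal_add]
      exact ENat.toENNReal_le.2 hkey2
    calc ∑' R, (lam R * ((chainSup (C R) (T r) : ℕ∞) : ℝ≥0∞) +
          lam R * ((chainSup (C R) (sepw x y \ T r) : ℕ∞) : ℝ≥0∞))
        ≤ ∑' R, (f R + lam R * ((L R : ℝ≥0∞) + (m R : ℝ≥0∞) + 1)) :=
          ENNReal.tsum_le_tsum hscale
      _ = gradedDist P C lam x y + Λ := by
          rw [ENNReal.tsum_add, hfsum, ← hΛ]
      _ ≤ gradedDist P C lam x y + 4 * (M : ℝ≥0∞) * Λ := add_le_add_right hΛ4 _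
  -- step estimate
  have hstep : ∀ r, gradedDist P C lam (z r) (z (r + 1)) ≤ 4 * (M : ℝ≥0∞) * Λ := by
    intro r
    rw [hdzz r]
    have hannsub : T (r + 1) \ T r ⊆
        {w | w ∈ sepw x y ∧ (r : ℝ≥0∞) * ε < hfun w ∧ hfun w ≤ (r : ℝ≥0∞) * ε + ε} := by
      intro w hw
      obtain ⟨⟨hwsep, hle⟩, hnot⟩ := hw
      refine ⟨hwsep, ?_, ?_⟩
      · by_contra hno
        push_neg at hno
        exact hnot ⟨hwsep, hno⟩
      · refine hle.trans (le_of_eq ?_)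
        push_cast
        ring
    have hrtop : ((r : ℝ≥0∞) * ε) ≠ ⊤ :=
      ENNReal.mul_ne_top (ENNReal.natCast_ne_top r) hεtop
    have hbound : ∀ R, lam R * ((chainSup (C R) (T (r + 1) \ T r) : ℕ∞) : ℝ≥0∞) ≤
        (if R < R₀ then ε + lam R * ((m R : ℝ≥0∞) + 1) else f R) := by
      intro R
      by_cases hR : R < R₀
      · rw [if_pos hR]
        exact hannS R _ ε hrtop _ hannsub
      · rw [if_neg hR]
        refine mul_le_mul_right ?_ _
        exact ENat.toENNReal_le.2 (chainSup_mono _ (fun w hw => (hannsub hw).1))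
    set g : ℕ → ℝ≥0∞ := fun R => if R < R₀ then ε + lam R * ((m R : ℝ≥0∞) + 1) else f R
      with hgdef
    have hsplit : ∑' R, g R = ∑ R ∈ Finset.range R₀, g R + ∑' i, g (i + R₀) :=
      (Summable.sum_add_tsum_nat_add' (f := g) (k := R₀) ENNReal.summable).symm
    have hpartial : ∑ R ∈ Finset.range R₀, g R ≤ Λ + Λ := by
      have heq : ∑ R ∈ Finset.range R₀, g R =
          ∑ R ∈ Finset.range R₀, (ε + lam R * ((m R : ℝ≥0∞) + 1)) := by
        refine Finset.sum_congr rfl fun R hR => ?_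
        rw [hgdef]
        simp only
        rw [if_pos (Finset.mem_range.1 hR)]
      rw [heq, Finset.sum_add_distrib]
      refine add_le_add ?_ ?_
      · rw [Finset.sum_const, Finset.card_range, nsmul_eq_mul]
        exact ENNReal.mul_div_le
      · refine le_trans (ENNReal.sum_le_tsum _) ?_
        rw [hΛ]
        refine ENNReal.tsum_le_tsum fun R => mul_le_mul_right ?_ _
        calc (m R : ℝ≥0∞) + 1 ≤ ((L R : ℝ≥0∞) + (m R : ℝ≥0∞)) + 1 :=
            add_le_add_left le_add_self _
          _ = (L R : ℝ≥0∞) + (m R : ℝ≥0∞) + 1 := rfl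
    have htail2 : ∑' i, g (i + R₀) ≤ Λ := by
      have heq : ∀ i, g (i + R₀) = f (i + R₀) := by
        intro i
        rw [hgdef]
        simp only
        rw [if_neg (by omega)]
      calc ∑' i, g (i + R₀) = ∑' i, f (i + R₀) := by
            exact tsum_congr heq
        _ ≤ Λ := htail
    have h3 : (3 : ℝ≥0∞) ≤ 4 * (M : ℝ≥0∞) := by
      have hM' : (1 : ℝ≥0∞) ≤ (M : ℝ≥0∞) := by exact_mod_cast hM
      calc (3 : ℝ≥0∞) ≤ 4 * 1 := by norm_num
        _ ≤ 4 * (M : ℝ≥0∞) := mul_le_mul_right hM' _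
    calc ∑' R, lam R * ((chainSup (C R) (T (r + 1) \ T r) : ℕ∞) : ℝ≥0∞)
        ≤ ∑' R, g R := ENNReal.tsum_le_tsum hbound
      _ = ∑ R ∈ Finset.range R₀, g R + ∑' i, g (i + R₀) := hsplit
      _ ≤ (Λ + Λ) + Λ := add_le_add hpartial htail2
      _ = 3 * Λ := by ring
      _ ≤ 4 * (M : ℝ≥0∞) * Λ := mul_le_mul_left h3 _
  exact ⟨n, z, hz0, hzn, fun r _ => hmem r, fun r _ => hstep r, fun r _ => hpoint r⟩

end WallDuality
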